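/- Exact retrieval of the ciphertext chain (Theorem 1, consistency of the SPCHS instance, deterministic form). Fix g ∈ G, integers s and u, an element h ∈ G (representing the hash value H(W) of the queried keyword W), a natural number m, exponents r : Fin (m+1) → ℤ and pointer values Pt : Fin (m+1) → G₁. Define the chain of keyword-searchable ciphertexts C : Fin (m+1) → G₁ × G × G₁ by C 0 = (e(g^s, h)^u, g^{r 0}, e(g^s, h)^{r 0} · Pt 0) and C (j+1) = (Pt j, g^{r (j+1)}, e(g^s, h)^{r (j+1)} · Pt (j+1)) for j+1 ≤ m, and the disclosed pointers p 0 = e(g^u, h^s), p (j+1) = (e((C j).2, h^s))⁻¹ · (C j).3. Let S be a finite set of triples in G₁ × G₁-indexed form G₁ × G × G₁ (all uploaded ciphertexts) such that: (i) C j ∈ S for every j ≤ m; (ii) the first components of distinct elements of S are distinct; and (iii) no element of S has first component equal to Pt m. Then for every j ≤ m, C j is the unique element of S whose first component equals the disclosed pointer p j, and the final disclosed pointer (e((C m).2, h^s))⁻¹ · (C m).3 = Pt m matches no element of S. Consequently the StructuredSearch algorithm, which repeatedly matches the current pointer against the first components of S, finds exactly the ciphertexts C 0, …, C m and then terminates.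 -/

import Mathlib

/-!
Decrypting a ciphertext `(·, g ^ r, e(g ^ s, h) ^ r * P)` with the trapdoor `h ^ s` returns `P`,
because bilinearity gives `e(g ^ r, h ^ s) = e(g ^ s, h) ^ r`; the same identity shows that the
head `e(g ^ s, h) ^ u` of the chain is the first disclosed pointer `e(g ^ u, h ^ s)`. Hence every
disclosed pointer is the first component of the next ciphertext of the chain, and distinctness of
first components in `S` makes each match unique, while the last pointer `Pt m` matches nothing.
-/

section Bilinear

variable {G G₁ : Type*} [CommGroup G] [CommGroup G₁] {e : G → G → G₁}

theorem bilinear_zpow_left (hbl : ∀ x y z : G, e (x * y) z = e x z * e y z)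
    (x y : G) (a : ℤ) : e (x ^ a) y = e x y ^ a :=
  map_zpow (MonoidHom.mk' (fun x => e x y) fun x x' => hbl x x' y) x a

theorem bilinear_zpow_right (hbr : ∀ x y z : G, e x (y * z) = e x y * e x z)
    (x y : G) (b : ℤ) : e x (y ^ b) = e x y ^ b :=
  map_zpow (MonoidHom.mk' (e x) fun y y' => hbr x y y') y b

theorem bilinear_zpow_zpow_swap (hbl : ∀ x y z : G, e (x * y) z = e x z * e y z)
    (hbr : ∀ x y z : G, e x (y * z) = e x y * e x z) (x y : G) (a b : ℤ) :
    e (x ^ a) (y ^ b) = e (x ^ b) y ^ a := by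
  rw [bilinear_zpow_left hbl, bilinear_zpow_left hbl, bilinear_zpow_right hbr]

theorem bilinear_inv_zpow_zpow_mul_cancel (hbl : ∀ x y z : G, e (x * y) z = e x z * e y z)
    (hbr : ∀ x y z : G, e x (y * z) = e x y * e x z) (x y : G) (a b : ℤ) (P : G₁) :
    (e (x ^ a) (y ^ b))⁻¹ * (e (x ^ b) y ^ a * P) = P := by
  rw [bilinear_zpow_zpow_swap hbl hbr, inv_mul_cancel_left]

end Bilinear

/-- Exact retrieval of the ciphertext chain
(Theorem 1, consistency of the SPCHS instance, deterministic form). -/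
theorem spchs_exact_retrieval
    {G G₁ : Type*} [CommGroup G] [CommGroup G₁]
    (e : G → G → G₁)
    (hbl : ∀ x y z : G, e (x * y) z = e x z * e y z)
    (hbr : ∀ x y z : G, e x (y * z) = e x y * e x z)
    (g h : G) (s u : ℤ) (m : ℕ)
    (r : Fin (m + 1) → ℤ) (Pt : Fin (m + 1) → G₁)
    (C : Fin (m + 1) → G₁ × G × G₁)
    (p : Fin (m + 1) → G₁)
    (hC0 : C 0 = (e (g ^ s) h ^ u, g ^ r 0, e (g ^ s) h ^ r 0 * Pt 0))
    (hCsucc : ∀ j : Fin m,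
      C j.succ = (Pt j.castSucc, g ^ r j.succ, e (g ^ s) h ^ r j.succ * Pt j.succ))
    (hp0 : p 0 = e (g ^ u) (h ^ s))
    (hpsucc : ∀ j : Fin m,
      p j.succ = (e (C j.castSucc).2.1 (h ^ s))⁻¹ * (C j.castSucc).2.2)
    (S : Finset (G₁ × G × G₁))
    (hmem : ∀ j : Fin (m + 1), C j ∈ S)
    (hinj : ∀ c ∈ S, ∀ d ∈ S, c.1 = d.1 → c = d)
    (hlast : ∀ c ∈ S, c.1 ≠ Pt (Fin.last m)) :
    (∀ j : Fin (m + 1),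
      (C j).1 = p j ∧ ∀ c ∈ S, c.1 = p j → c = C j) ∧
    (∀ c ∈ S, c.1 ≠ (e (C (Fin.last m)).2.1 (h ^ s))⁻¹ * (C (Fin.last m)).2.2) := by
  have hdecrypt : ∀ j, (e (C j).2.1 (h ^ s))⁻¹ * (C j).2.2 = Pt j := by
    intro j
    obtain ⟨hrand, hmask⟩ : (C j).2.1 = g ^ r j ∧ (C j).2.2 = e (g ^ s) h ^ r j * Pt j := by
      cases j using Fin.cases with
      | zero => simp [hC0]
      | succ i => simp [hCsucc i]
    rw [hrand, hmask, bilinear_inv_zpow_zpow_mul_cancel hbl hbr]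
  have hpointer : ∀ j, (C j).1 = p j := by
    intro j
    cases j using Fin.cases with
    | zero => rw [hC0, hp0, bilinear_zpow_zpow_swap hbl hbr]
    | succ i => rw [hCsucc i, hpsucc i, hdecrypt]
  refine ⟨fun j => ⟨hpointer j, fun c hc hcp => ?_⟩, fun c hc hcp => ?_⟩
  · exact hinj c hc (C j) (hmem j) (hcp.trans (hpointer j).symm)
  · exact hlast c hc (hcp.trans (hdecrypt _))
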